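/- Let ρ : T³ → ℝ be smooth and positive. Then the following identity of matrix-valued functions holds pointwise: div(ρ ∇²(log ρ)) = ∇(Δρ) − 4 div(∇√ρ ⊗ ∇√ρ), where for a matrix field M, (div M)ᵢ = Σⱼ ∂ⱼ Mᵢⱼ, and ∇²(log ρ) is the Hessian of log ρ. -/

import Mathlib

open MeasureTheory Real

/-- Partial derivative in direction `i`. -/
noncomputable def pd (i : Fin 3) (f : (Fin 3 → ℝ) → ℝ) : (Fin 3 → ℝ) → ℝ :=
  fun x => fderiv ℝ f x (Pi.single i 1)

/-- The fundamental domain of the 3-torus, the unit cube. -/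
def T3 : Set (Fin 3 → ℝ) := Set.univ.pi fun _ => Set.Icc 0 1

/-- `f` is 1-periodic in each coordinate direction. -/
def Periodic3 (f : (Fin 3 → ℝ) → ℝ) : Prop :=
  ∀ (x : Fin 3 → ℝ) (i : Fin 3), f (x + Pi.single i 1) = f x


section aux

variable {f g : (Fin 3 → ℝ) → ℝ} {i j : Fin 3} {x : Fin 3 → ℝ}

lemma contDiff_pd (hf : ContDiff ℝ (⊤ : ℕ∞) f) (i : Fin 3) : ContDiff ℝ (⊤ : ℕ∞) (pd i f) := by
  have h1 : ContDiff ℝ (⊤ : ℕ∞) (fderiv ℝ f) := hf.fderiv_right (by simp)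
  exact (ContinuousLinearMap.apply ℝ ℝ ((Pi.single i 1 : Fin 3 → ℝ))).contDiff.comp h1

lemma pd_congr (h : ∀ y, f y = g y) : pd i f x = pd i g x := by
  have : f = g := funext h
  rw [this]

lemma pd_mul (hf : DifferentiableAt ℝ f x) (hg : DifferentiableAt ℝ g x) :
    pd i (fun y => f y * g y) x = pd i f x * g x + f x * pd i g x := by
  simp only [pd, fderiv_fun_mul hf hg]
  simp [mul_comm]; ring

lemma pd_sub (hf : DifferentiableAt ℝ f x) (hg : DifferentiableAt ℝ g x) :
    pd i (fun y => f y - g y) x = pd i f x - pd i g x := by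
  simp only [pd, fderiv_fun_sub hf hg]; simp

lemma pd_const_mul (hf : DifferentiableAt ℝ f x) (c : ℝ) :
    pd i (fun y => c * f y) x = c * pd i f x := by
  simp only [pd, fderiv_const_mul hf c]; simp

lemma pd_sum {F : Fin 3 → (Fin 3 → ℝ) → ℝ} (hF : ∀ j, DifferentiableAt ℝ (F j) x) :
    pd i (fun y => ∑ j : Fin 3, F j y) x = ∑ j : Fin 3, pd i (F j) x := by
  simp only [pd, fderiv_fun_sum (fun j _ => hF j)]; simp

lemma pd_inv (hg : DifferentiableAt ℝ g x) (h0 : g x ≠ 0) :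
    pd i (fun y => (g y)⁻¹) x = -pd i g x / (g x)^2 := by
  have h := (hasDerivAt_inv h0).comp_hasFDerivAt x hg.hasFDerivAt
  have h' : HasFDerivAt (fun y => (g y)⁻¹) ((-(g x ^ 2)⁻¹) • fderiv ℝ g x) x := h
  simp only [pd, h'.fderiv]
  simp
  ring

lemma pd_div (hf : DifferentiableAt ℝ f x) (hg : DifferentiableAt ℝ g x) (h0 : g x ≠ 0) :
    pd i (fun y => f y / g y) x = (pd i f x * g x - f x * pd i g x) / (g x)^2 := by
  have h1 : pd i (fun y => f y / g y) x = pd i (fun y => f y * (g y)⁻¹) x :=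
    pd_congr fun y => div_eq_mul_inv _ _
  rw [h1, pd_mul (g := fun y => (g y)⁻¹) hf (hg.inv h0), pd_inv hg h0]
  field_simp
  ring

lemma pd_log (hf : DifferentiableAt ℝ f x) (h0 : f x ≠ 0) :
    pd i (fun y => Real.log (f y)) x = pd i f x / f x := by
  have h := (Real.hasDerivAt_log h0).comp_hasFDerivAt x hf.hasFDerivAt
  have h' : HasFDerivAt (fun y => Real.log (f y)) ((f x)⁻¹ • fderiv ℝ f x) x := h
  simp only [pd, h'.fderiv]
  simp [div_eq_inv_mul]

lemma pd_sqrt (hf : DifferentiableAt ℝ f x) (h0 : f x ≠ 0) :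
    pd i (fun y => Real.sqrt (f y)) x = pd i f x / (2 * Real.sqrt (f x)) := by
  have h := (Real.hasDerivAt_sqrt h0).comp_hasFDerivAt x hf.hasFDerivAt
  have h' : HasFDerivAt (fun y => Real.sqrt (f y)) ((1 / (2 * Real.sqrt (f x))) • fderiv ℝ f x) x := h
  simp only [pd, h'.fderiv]
  simp [div_eq_inv_mul]

lemma pd_comm (hf : ContDiff ℝ (⊤ : ℕ∞) f) (i j : Fin 3) (x : Fin 3 → ℝ) :
    pd i (pd j f) x = pd j (pd i f) x := by
  have hd : ∀ y, HasFDerivAt f (fderiv ℝ f y) y := fun y =>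
    (hf.differentiable (by simp) y).hasFDerivAt
  have h2 : HasFDerivAt (fderiv ℝ f) (fderiv ℝ (fderiv ℝ f) x) x :=
    (((hf.fderiv_right (m := (⊤ : ℕ∞)) (by simp)).differentiable (by simp)) x).hasFDerivAt
  have hsym := second_derivative_symmetric hd h2 (Pi.single i 1) (Pi.single j 1)
  have key : ∀ v w : Fin 3 → ℝ,
      fderiv ℝ (fun y => fderiv ℝ f y w) x v = fderiv ℝ (fderiv ℝ f) x v w := by
    intro v w
    have h3 : HasFDerivAt (fun y => fderiv ℝ f y w)
        ((ContinuousLinearMap.apply ℝ ℝ w).comp (fderiv ℝ (fderiv ℝ f) x)) x :=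
      (ContinuousLinearMap.apply ℝ ℝ w).hasFDerivAt.comp x h2
    rw [h3.fderiv]; rfl
  show fderiv ℝ (fun y => fderiv ℝ f y (Pi.single j 1)) x (Pi.single i 1)
      = fderiv ℝ (fun y => fderiv ℝ f y (Pi.single i 1)) x (Pi.single j 1)
  rw [key, key, hsym]

end aux

theorem capillarity_tensor_identity
    (ρ : (Fin 3 → ℝ) → ℝ) (hρ : ContDiff ℝ (⊤ : ℕ∞) ρ) (hpos : ∀ x, 0 < ρ x)
    (x : Fin 3 → ℝ) (i : Fin 3) :
    (∑ j : Fin 3,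
        pd j (fun y => ρ y * pd i (pd j (fun z => Real.log (ρ z))) y) x)
      = pd i (fun y => ∑ j : Fin 3, pd j (pd j ρ) y) x
        - 4 * ∑ j : Fin 3,
            pd j (fun y => pd i (fun z => Real.sqrt (ρ z)) y *
              pd j (fun z => Real.sqrt (ρ z)) y) x := by
  have hne : ∀ y, ρ y ≠ 0 := fun y => (hpos y).ne'
  have hdρ : ∀ y, DifferentiableAt ℝ ρ y := fun y => hρ.differentiable (by simp) y
  have hpdρ : ∀ j, ContDiff ℝ (⊤ : ℕ∞) (pd j ρ) := fun j => contDiff_pd hρ j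
  have hpd2ρ : ∀ j k, ContDiff ℝ (⊤ : ℕ∞) (pd j (pd k ρ)) := fun j k => contDiff_pd (hpdρ k) j
  have hdpdρ : ∀ (j : Fin 3) y, DifferentiableAt ℝ (pd j ρ) y := fun j y =>
    (hpdρ j).differentiable (by simp) y
  have hdpd2ρ : ∀ (j k : Fin 3) y, DifferentiableAt ℝ (pd j (pd k ρ)) y := fun j k y =>
    (hpd2ρ j k).differentiable (by simp) y
  -- the quotient function Q_j y := pd i ρ y * pd j ρ y / ρ y
  have hQ : ∀ j : Fin 3, ContDiff ℝ (⊤ : ℕ∞) (fun y => pd i ρ y * pd j ρ y / ρ y) := fun j =>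
    ((hpdρ i).mul (hpdρ j)).div hρ hne
  -- Step 1: log term
  have hlog : ∀ (j : Fin 3) (y : Fin 3 → ℝ),
      ρ y * pd i (pd j (fun z => Real.log (ρ z))) y
        = pd i (pd j ρ) y - pd i ρ y * pd j ρ y / ρ y := by
    intro j y
    have e1 : pd i (pd j (fun z => Real.log (ρ z))) y
        = pd i (fun z => pd j ρ z / ρ z) y :=
      pd_congr fun z => pd_log (hdρ z) (hne z)
    have h0 := hne y
    rw [e1, pd_div (hdpdρ j y) (hdρ y) (hne y)]
    field_simp
  -- Step 2: sqrt term
  have hsqrt : ∀ (j : Fin 3) (y : Fin 3 → ℝ),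
      pd i (fun z => Real.sqrt (ρ z)) y * pd j (fun z => Real.sqrt (ρ z)) y
        = (4:ℝ)⁻¹ * (pd i ρ y * pd j ρ y / ρ y) := by
    intro j y
    rw [pd_sqrt (hdρ y) (hne y), pd_sqrt (hdρ y) (hne y)]
    have hs : Real.sqrt (ρ y) * Real.sqrt (ρ y) = ρ y := Real.mul_self_sqrt (hpos y).le
    rw [div_mul_div_comm]
    have h4 : (2 * Real.sqrt (ρ y)) * (2 * Real.sqrt (ρ y)) = 4 * ρ y := by
      nlinarith [hs]
    rw [h4, div_eq_mul_inv, div_eq_mul_inv, mul_inv]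
    ring
  -- rewrite each summand on the left
  have hL : ∀ j : Fin 3,
      pd j (fun y => ρ y * pd i (pd j (fun z => Real.log (ρ z))) y) x
        = pd j (pd i (pd j ρ)) x - pd j (fun y => pd i ρ y * pd j ρ y / ρ y) x := by
    intro j
    have := pd_congr (i := j) (x := x) (hlog j)
    rw [this, pd_sub (hdpd2ρ i j x) ((hQ j).differentiable (by simp) x)]
  -- rewrite each summand in the sqrt sum
  have hR : ∀ j : Fin 3,
      pd j (fun y => pd i (fun z => Real.sqrt (ρ z)) y *
          pd j (fun z => Real.sqrt (ρ z)) y) x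
        = (4:ℝ)⁻¹ * pd j (fun y => pd i ρ y * pd j ρ y / ρ y) x := by
    intro j
    have := pd_congr (i := j) (x := x) (hsqrt j)
    rw [this, pd_const_mul ((hQ j).differentiable (by simp) x)]
  -- the first part of RHS
  have hsum : pd i (fun y => ∑ j : Fin 3, pd j (pd j ρ) y) x
      = ∑ j : Fin 3, pd i (pd j (pd j ρ)) x :=
    pd_sum fun j => hdpd2ρ j j x
  have hcomm : ∀ j : Fin 3, pd j (pd i (pd j ρ)) x = pd i (pd j (pd j ρ)) x := fun j =>
    pd_comm (hpdρ j) j i x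
  simp only [hL, hR, hsum, hcomm, Finset.sum_sub_distrib, Finset.mul_sum]
  simp only [div_eq_mul_inv, one_mul]
  simp
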